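/- arXiv:1207.6034 — 2 statements merged into one kernel-verified Lean document; each statement's English description precedes it below -/
import Mathlib

section
/- Suppose every continuous curve f : [0,1] → E is Lebesgue–Pettis integrable. Then for every continuous g : [0,1] → E and every non-atomic Borel probability measure ρ on [0,1], the pushforward measure ρ ∘ g⁻¹ has a barycenter in E. -/
/-!
Let `σ = (ρ + λ)/2` on `[0,1]`, with `λ` Lebesgue measure. It has no atoms, so its distribution
function `F` is continuous, and full support, so `F` is strictly increasing: `F` is a
homeomorphism of `[0,1]` with `F_* σ = λ`. The Pettis integral `v` of the continuous curve
`g ∘ F⁻¹` is therefore the `σ`-Pettis integral of `g`, and if `w` is the Lebesgue–Pettis integral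
of `g`, then `ρ = 2σ - λ` makes `2v - w` the barycenter of `ρ ∘ g⁻¹`.
-/

open MeasureTheory Set

variable {E : Type*} [AddCommGroup E] [Module ℝ E] [TopologicalSpace E]
  [IsTopologicalAddGroup E] [ContinuousSMul ℝ E] [LocallyConvexSpace ℝ E] [T2Space E]
  [MeasurableSpace E] [BorelSpace E]

def IsBarycenter (μ : Measure E) (r : E) : Prop :=
  ∀ e' : E →L[ℝ] ℝ, Integrable (fun y => e' y) μ ∧ e' r = ∫ y, e' y ∂μ

def IsPettisIntegral {X : Type*} [MeasurableSpace X] (ν : Measure X) (f : X → E) (v : E) : Prop :=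
  ∀ e' : E →L[ℝ] ℝ, Integrable (fun x => e' (f x)) ν ∧ e' v = ∫ x, e' (f x) ∂ν


open Measure ProbabilityTheory unitInterval Function
open scoped ENNReal

namespace MeasureTheory

instance NullSingletonClass.add {α : Type*} [MeasurableSpace α] (μ ν : Measure α)
    [NullSingletonClass μ] [NullSingletonClass ν] : NullSingletonClass (μ + ν) :=
  ⟨fun x => by simp⟩

instance NullSingletonClass.smul {α : Type*} [MeasurableSpace α] (μ : Measure α)
    [NullSingletonClass μ] (c : ℝ≥0∞) : NullSingletonClass (c • μ) :=
  ⟨fun x => by simp⟩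

theorem MeasurableEmbedding.nullSingletonClass_map {α β : Type*} [MeasurableSpace α]
    [MeasurableSpace β] {f : α → β} (hf : MeasurableEmbedding f) (μ : Measure α)
    [NullSingletonClass μ] : NullSingletonClass (μ.map f) :=
  ⟨fun y => by
    rw [hf.map_apply]
    exact (subsingleton_singleton.preimage hf.injective).measure_zero μ⟩

theorem isProbabilityMeasure_half_add {α : Type*} [MeasurableSpace α] (μ ν : Measure α)
    [IsProbabilityMeasure μ] [IsProbabilityMeasure ν] :
    IsProbabilityMeasure ((2 : ℝ≥0∞)⁻¹ • (μ + ν)) :=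
  ⟨by simp [ENNReal.inv_two_add_inv_two]⟩

end MeasureTheory

theorem ProbabilityTheory.continuous_cdf (μ : Measure ℝ) [IsProbabilityMeasure μ]
    [NullSingletonClass μ] : Continuous (cdf μ) := by
  refine continuous_iff_continuousAt.2 fun x => ?_
  have hright : rightLim (cdf μ) x = cdf μ x :=
    (monotone_cdf μ).continuousWithinAt_Ioi_iff_rightLim_eq.1
      (((cdf μ).right_continuous x).mono Ioi_subset_Ici_self)
  have hjump := (cdf μ).measure_singleton x
  rw [measure_cdf, measure_singleton, eq_comm, ENNReal.ofReal_eq_zero, sub_nonpos] at hjump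
  rw [(monotone_cdf μ).continuousAt_iff_leftLim_eq_rightLim, hright]
  exact le_antisymm ((monotone_cdf μ).leftLim_le le_rfl) hjump

namespace unitInterval

instance : IsOpenPosMeasure (volume : Measure I) := by
  refine ⟨fun U hU ⟨x, hx⟩ => ?_⟩
  rcases (le_one x).lt_or_eq with hx1 | hx1
  · obtain ⟨u, hxu, hsub⟩ := exists_Ico_subset_of_mem_nhds (hU.mem_nhds hx) ⟨1, hx1⟩
    exact ((by simpa using hxu : 0 < volume (Ico x u)).trans_le (measure_mono hsub)).ne'
  · have hx0 : (0 : I) < x := by rw [← Subtype.coe_lt_coe, hx1]; norm_num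
    obtain ⟨l, hlx, hsub⟩ := exists_Ioc_subset_of_mem_nhds (hU.mem_nhds hx) ⟨0, hx0⟩
    exact ((by simpa using hlx : 0 < volume (Ioc l x)).trans_le (measure_mono hsub)).ne'

variable (μ : Measure I)

theorem strictMono_measureReal_Icc_zero [IsFiniteMeasure μ] [IsOpenPosMeasure μ] :
    StrictMono fun x : I => μ.real (Icc 0 x) := by
  intro x y hxy
  have hpos : 0 < μ.real (Ioc x y) := by
    refine ENNReal.toReal_pos (ne_of_gt ?_) (measure_ne_top μ _)
    exact ((measure_Ioo_pos μ).2 hxy).trans_le (measure_mono Ioo_subset_Ioc_self)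
  dsimp only
  rw [← Icc_union_Ioc_eq_Icc nonneg' hxy.le, measureReal_union
    ((Iic_disjoint_Ioc le_rfl).mono_left Icc_subset_Iic_self) measurableSet_Ioc]
  linarith

theorem continuous_measureReal_Icc_zero [IsProbabilityMeasure μ] [NullSingletonClass μ] :
    Continuous fun x : I => μ.real (Icc 0 x) := by
  have := isProbabilityMeasure_map (μ := μ) measurable_subtype_coe.aemeasurable
  have := measurableEmbedding_coe.nullSingletonClass_map μ
  simp_rw [← unitInterval.cdf_eq_real]
  exact (continuous_cdf _).comp continuous_subtype_val

theorem exists_homeomorph_map_eq_volume [IsProbabilityMeasure μ] [NullSingletonClass μ]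
    [IsOpenPosMeasure μ] : ∃ φ : I ≃ₜ I, μ.map φ = volume := by
  set F : I → I := fun x => ⟨μ.real (Icc 0 x), measureReal_nonneg, measureReal_le_one⟩
  have hF : Continuous F := (continuous_measureReal_Icc_zero μ).subtype_mk _
  have hF0 : F 0 = 0 := Subtype.ext (by simp [F, measureReal_def])
  have hF1 : F 1 = 1 := Subtype.ext (by simp [F, ← univ_eq_Icc])
  have hsurj : Surjective F := fun y => by
    have hIVT := intermediate_value_univ 0 1 hF
    rw [hF0, hF1] at hIVT
    exact hIVT ⟨nonneg', le_one'⟩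
  let φ := StrictMono.orderIsoOfSurjective F (fun x y hxy =>
    Subtype.coe_lt_coe.1 (strictMono_measureReal_Icc_zero μ hxy)) hsurj
  refine ⟨φ.toHomeomorph, Measure.ext_of_Iic _ _ fun a => ?_⟩
  have hFa : μ.real (Icc 0 (φ.symm a)) = a := congrArg Subtype.val (φ.apply_symm_apply a)
  rw [map_apply φ.toHomeomorph.measurable measurableSet_Iic, OrderIso.coe_toHomeomorph,
    φ.preimage_Iic, volume_Iic, ← hFa, ofReal_measureReal]
  exact congrArg μ Icc_bot.symm

end unitInterval

section Pettis

omit [IsTopologicalAddGroup E] [ContinuousSMul ℝ E] [LocallyConvexSpace ℝ E] [T2Space E]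

variable {X : Type*} [MeasurableSpace X] {f : X → E} {v w : E}

omit [MeasurableSpace E] [BorelSpace E] in
theorem isPettisIntegral_map_equiv {Y : Type*} [MeasurableSpace Y] (ν : Measure X) (φ : X ≃ᵐ Y)
    (f : Y → E) (v : E) : IsPettisIntegral (ν.map φ) f v ↔ IsPettisIntegral ν (f ∘ φ) v := by
  simp only [IsPettisIntegral, integrable_map_equiv, integral_map_equiv]
  rfl

theorem IsPettisIntegral.isBarycenter_map {ν : Measure X} (h : IsPettisIntegral ν f v)
    (hf : AEMeasurable f ν) : IsBarycenter (ν.map f) v := fun e' => by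
  rw [integrable_map_measure e'.continuous.aestronglyMeasurable hf,
    integral_map hf e'.continuous.aestronglyMeasurable]
  exact h e'

omit [MeasurableSpace E] [BorelSpace E] in
theorem IsPettisIntegral.two_smul_sub {ρ ν : Measure X}
    (hv : IsPettisIntegral ((2 : ℝ≥0∞)⁻¹ • (ρ + ν)) f v) (hw : IsPettisIntegral ν f w) :
    IsPettisIntegral ρ f ((2 : ℝ) • v - w) := fun e' => by
  obtain ⟨hiv, hev⟩ := hv e'
  obtain ⟨hiν, hew⟩ := hw e'
  have hiρ : Integrable (fun x => e' (f x)) ρ :=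
    ((integrable_smul_measure (by simp) (by simp)).1 hiv).left_of_add_measure
  refine ⟨hiρ, ?_⟩
  rw [integral_smul_measure, integral_add_measure hiρ hiν, ← hew] at hev
  simp only [map_sub, map_smul, smul_eq_mul, hev, ENNReal.toReal_inv, ENNReal.toReal_ofNat]
  ring

end Pettis

theorem stmt6
    (hPettis : ∀ f : Icc (0:ℝ) 1 → E, Continuous f → ∃ v, IsPettisIntegral volume f v)
    (g : Icc (0:ℝ) 1 → E) (hg : Continuous g)
    (ρ : Measure (Icc (0:ℝ) 1)) [IsProbabilityMeasure ρ]
    (hna : ∀ x, ρ {x} = 0) :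
    ∃ r : E, IsBarycenter (ρ.map g) r := by
  have : NullSingletonClass ρ := ⟨hna⟩
  set μ : Measure I := (2 : ℝ≥0∞)⁻¹ • (ρ + volume)
  have := isProbabilityMeasure_half_add ρ volume
  have : IsOpenPosMeasure (ρ + volume) :=
    (Measure.le_add_left le_rfl : volume ≤ ρ + volume).isOpenPosMeasure
  have : IsOpenPosMeasure μ := isOpenPosMeasure_smul _ (by simp)
  obtain ⟨φ, hφ⟩ := exists_homeomorph_map_eq_volume μ
  obtain ⟨v, hv⟩ := hPettis (g ∘ φ.symm) (hg.comp φ.symm.continuous)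
  obtain ⟨w, hw⟩ := hPettis g hg
  rw [← hφ] at hv
  have hvμ : IsPettisIntegral μ g v := by
    simpa [Function.comp_assoc] using (isPettisIntegral_map_equiv μ φ.toMeasurableEquiv _ _).1 hv
  exact ⟨(2 : ℝ) • v - w, (hvμ.two_smul_sub hw).isBarycenter_map hg.measurable.aemeasurable⟩
end

section
/- Let μ be a Borel probability measure with compact metrizable support K in a locally convex Hausdorff space E, with discrete part μ_d = Σᵢ aᵢ δ_{xᵢ} where all xᵢ ≠ 0. Replace each point mass δ_{xᵢ} by the uniform distribution on the segment [½xᵢ, ³⁄₂xᵢ] = {t xᵢ : t ∈ [½, ³⁄₂]}. Then the resulting measure μ̃ is non-atomic, is concentrated on the compact metrizable set {t x : t ∈ [½,³⁄₂], x ∈ K} ∪ support(μ − μ_d), and any barycenter of μ̃ is also a barycenter of μ. -/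
/-
For `x ≠ 0` the map `t ↦ t • x` is injective, so the uniform measure on the segment
`[½x, ³⁄₂x]` has no atoms; and since `t` has mean `1` on `[½, ³⁄₂]`, every continuous linear
functional `ℓ` integrates to `ℓ x` against it, exactly as against `δₓ`. Hence replacing the atoms of
`μ` by segments changes neither the mass nor any integral `∫ ℓ`, which gives the barycenter claim.
The atoms of `μ` lie in `K`, so the segments lie in the image of `[½, ³⁄₂] × K` under `(t, x) ↦ t • x`,
a continuous Hausdorff image of a compact metrizable space, hence compact and metrizable.
-/

open MeasureTheory Set ENNReal

variable {E : Type*} [AddCommGroup E] [Module ℝ E] [TopologicalSpace E]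
  [IsTopologicalAddGroup E] [ContinuousSMul ℝ E] [LocallyConvexSpace ℝ E] [T2Space E]
  [MeasurableSpace E] [BorelSpace E]

theorem TopologicalSpace.MetrizableSpace.of_continuous_surjective {X Y : Type*}
    [TopologicalSpace X] [TopologicalSpace Y] [CompactSpace X] [MetrizableSpace X] [T2Space Y]
    {f : X → Y} (hf : Continuous f) (hsurj : Function.Surjective f) : MetrizableSpace Y := by
  have : CompactSpace Y := hsurj.compactSpace hf
  let := metrizableSpaceMetric X
  -- `X × X` is hereditarily Lindelöf, so countably many Urysohn functions separate points of `Y`.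
  obtain ⟨r, hr, hcover⟩ := (HereditarilyLindelofSpace.isLindelof
      {p : X × X | f p.1 ≠ f p.2}).elim_countable_subcover
    (fun g : C(Y, ℝ) => {p : X × X | g (f p.1) ≠ g (f p.2)})
    (fun g => isOpen_ne_fun (by fun_prop) (by fun_prop)) (by
      rintro ⟨p, q⟩ hpq
      obtain ⟨g, hgp, hgq, -⟩ := exists_continuous_zero_one_of_isClosed isClosed_singleton
        isClosed_singleton (disjoint_singleton.2 hpq)
      exact mem_iUnion.2 ⟨g, by simp [hgp rfl, hgq rfl]⟩)
  have := hr.toEncodable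
  refine Metric.PiNatEmbed.TopologicalSpace.MetrizableSpace.of_countable_separating
    (fun g : r => (g : C(Y, ℝ))) (fun g => g.1.continuous) ?_
  intro y y' hne
  obtain ⟨p, rfl⟩ := hsurj y
  obtain ⟨q, rfl⟩ := hsurj y'
  obtain ⟨g, hg, hne'⟩ := mem_iUnion₂.1 (hcover (show (p, q) ∈ _ from hne))
  exact ⟨⟨g, hg⟩, hne'⟩

theorem Continuous.metrizableSpace_range {X Y : Type*} [TopologicalSpace X] [TopologicalSpace Y]
    [CompactSpace X] [TopologicalSpace.MetrizableSpace X] [T2Space Y] {f : X → Y}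
    (hf : Continuous f) : TopologicalSpace.MetrizableSpace (range f) :=
  .of_continuous_surjective hf.rangeFactorization rangeFactorization_surjective

theorem Continuous.integrable_of_measure_compl_eq_zero {X F : Type*} [TopologicalSpace X]
    [T2Space X] [MeasurableSpace X] [OpensMeasurableSpace X] [NormedAddCommGroup F]
    {μ : Measure X} [IsFiniteMeasure μ] {f : X → F} (hf : Continuous f) {K : Set X}
    (hK : IsCompact K) (hμK : μ Kᶜ = 0) : Integrable f μ := by
  rw [← Measure.restrict_eq_self_of_ae_mem (mem_ae_iff.2 hμK)]
  exact hf.continuousOn.integrableOn_compact hK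

theorem mem_of_smul_dirac_le {α : Type*} [MeasurableSpace α] {μ : Measure α} {c : ℝ≥0∞}
    {x : α} {s : Set α} (hc : c ≠ 0) (hle : c • Measure.dirac x ≤ μ) (hs : μ sᶜ = 0) :
    x ∈ s := by
  by_contra hx
  have hxs : μ {x} = 0 := measure_mono_null (singleton_subset_iff.2 hx) hs
  have : c ≤ μ {x} := by
    simpa [Measure.dirac_apply_of_mem (mem_singleton x)] using Measure.le_iff'.1 hle {x}
  exact hc (le_antisymm (hxs ▸ this) zero_le)

theorem integral_sum_smul_dirac {α G : Type*} [MeasurableSpace α] [MeasurableSingletonClass α]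
    [NormedAddCommGroup G] [NormedSpace ℝ G] [CompleteSpace G] {c : ℕ → ℝ≥0∞} {x : ℕ → α}
    {f : α → G}
    (hf : Integrable f (Measure.sum fun i => c i • Measure.dirac (x i))) :
    ∫ y, f y ∂(Measure.sum fun i => c i • Measure.dirac (x i)) = ∑' i, (c i).toReal • f (x i) := by
  rw [integral_sum_measure hf]
  exact tsum_congr fun i => by rw [integral_smul_measure, integral_dirac]

theorem smul_image_prod_union_eq_range {V : Type*} [AddCommGroup V] [Module ℝ V] {T : Set ℝ}
    (hT : 1 ∈ T) (K : Set V) :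
    (fun p : ℝ × V => p.1 • p.2) '' (T ×ˢ K) ∪ K =
      range fun p : T × K => (p.1 : ℝ) • (p.2 : V) := by
  ext y
  constructor
  · rintro (⟨⟨t, z⟩, ⟨ht, hz⟩, rfl⟩ | hy)
    · exact ⟨(⟨t, ht⟩, ⟨z, hz⟩), rfl⟩
    · exact ⟨(⟨1, hT⟩, ⟨y, hy⟩), one_smul ℝ y⟩
  · rintro ⟨⟨⟨t, ht⟩, ⟨z, hz⟩⟩, rfl⟩
    exact Or.inl ⟨(t, z), ⟨ht, hz⟩, rfl⟩

section SegmentMeasure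

variable {V : Type*} [AddCommGroup V] [Module ℝ V] [TopologicalSpace V] [ContinuousSMul ℝ V]
  [MeasurableSpace V] [BorelSpace V]

noncomputable def segmentMeasure (x : V) : Measure V :=
  (volume.restrict (Icc (1/2:ℝ) (3/2))).map fun t : ℝ => t • x

theorem segmentMeasure_singleton [T1Space V] {x : V} (hx : x ≠ 0) (y : V) :
    segmentMeasure x {y} = 0 := by
  rw [segmentMeasure, Measure.map_apply (by fun_prop) (measurableSet_singleton y)]
  refine Set.Subsingleton.measure_zero (fun s hs t ht => ?_) _
  exact smul_left_injective ℝ hx (hs.trans ht.symm)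

theorem segmentMeasure_compl_eq_zero {x : V} {s : Set V} (hs : MeasurableSet s)
    (hxs : ∀ t ∈ Icc (1/2:ℝ) (3/2), t • x ∈ s) : segmentMeasure x sᶜ = 0 := by
  rw [segmentMeasure, Measure.map_apply (by fun_prop) hs.compl,
    Measure.restrict_apply' measurableSet_Icc]
  exact measure_mono_null (fun t ⟨hts, ht⟩ => hts (hxs t ht)) measure_empty

theorem integral_segmentMeasure (ℓ : V →L[ℝ] ℝ) (x : V) : ∫ y, ℓ y ∂segmentMeasure x = ℓ x := by
  have hmean : ∫ t in Icc (1/2:ℝ) (3/2), t = 1 := by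
    rw [integral_Icc_eq_integral_Ioc, ← intervalIntegral.integral_of_le (by norm_num),
      integral_id]
    norm_num
  rw [segmentMeasure, integral_map (by fun_prop) ℓ.continuous.aestronglyMeasurable]
  simp only [ℓ.map_smul, smul_eq_mul]
  rw [integral_mul_const, hmean, one_mul]

theorem sum_smul_segmentMeasure_compl_eq_zero {a : ℕ → ℝ≥0∞} {x : ℕ → V} {s : Set V}
    (hs : MeasurableSet s) (hxs : ∀ i, a i ≠ 0 → ∀ t ∈ Icc (1/2:ℝ) (3/2), t • x i ∈ s) :
    (Measure.sum fun i => a i • segmentMeasure (x i)) sᶜ = 0 := by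
  rw [Measure.sum_apply _ hs.compl]
  refine ENNReal.tsum_eq_zero.2 fun i => ?_
  rcases eq_or_ne (a i) 0 with hai | hai
  · simp [hai]
  · rw [Measure.smul_apply, segmentMeasure_compl_eq_zero hs (hxs i hai), smul_zero]

theorem IsBarycenter.of_segment_replacement [T1Space V] {ν : Measure V}
    {a : ℕ → ℝ≥0∞} {x : ℕ → V} {r : V}
    (hint : ∀ ℓ : V →L[ℝ] ℝ,
      Integrable (fun y => ℓ y) (ν + Measure.sum fun i => a i • Measure.dirac (x i)))
    (hr : IsBarycenter (ν + Measure.sum fun i => a i • segmentMeasure (x i)) r) :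
    IsBarycenter (ν + Measure.sum fun i => a i • Measure.dirac (x i)) r := by
  intro ℓ
  obtain ⟨hseg, hbar⟩ := hr ℓ
  have hdirac := hint ℓ
  have hleft {ρ : Measure V} : ν ≤ ν + ρ := Measure.le_add_right le_rfl
  have hright {ρ : Measure V} : ρ ≤ ν + ρ := Measure.le_add_left le_rfl
  refine ⟨hdirac, ?_⟩
  rw [hbar, integral_add_measure (hseg.mono_measure hleft) (hseg.mono_measure hright),
    integral_add_measure (hdirac.mono_measure hleft) (hdirac.mono_measure hright),
    integral_sum_smul_dirac (hdirac.mono_measure hright),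
    integral_sum_measure (hseg.mono_measure hright)]
  congr 1
  exact tsum_congr fun i => by rw [integral_smul_measure, integral_segmentMeasure]

end SegmentMeasure

theorem stmt9 (μ : Measure E) [IsProbabilityMeasure μ]
    (K : Set E) (hK : IsCompact K) (hKm : TopologicalSpace.MetrizableSpace K)
    (hconc : μ Kᶜ = 0)
    (a : ℕ → ℝ≥0∞) (x : ℕ → E) (hx : ∀ i, x i ≠ 0)
    (μd : Measure E) (hμd : μd = Measure.sum fun i => a i • Measure.dirac (x i))
    (hle : μd ≤ μ) (hdiscrete : ∀ y : E, (μ - μd) {y} = 0) :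
    let μt : Measure E := (μ - μd) +
      Measure.sum fun i =>
        a i • Measure.map (fun t : ℝ => t • x i) (volume.restrict (Icc (1/2:ℝ) (3/2)))
    let S : Set E := ((fun p : ℝ × E => p.1 • p.2) '' ((Icc (1/2:ℝ) (3/2)) ×ˢ K)) ∪ K
    (∀ y : E, μt {y} = 0) ∧ μt Sᶜ = 0 ∧
      IsCompact S ∧ TopologicalSpace.MetrizableSpace S ∧
      ∀ r : E, IsBarycenter μt r → IsBarycenter μ r := by
  intro μt S
  have hμt : μt = (μ - μd) + Measure.sum fun i => a i • segmentMeasure (x i) := rfl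
  rw [hμt]
  have : IsFiniteMeasure μd := isFiniteMeasure_of_le μ hle
  have : CompactSpace K := isCompact_iff_compactSpace.mp hK
  have hS : S = range fun p : Icc (1/2:ℝ) (3/2) × K => (p.1 : ℝ) • (p.2 : E) :=
    smul_image_prod_union_eq_range (by norm_num) K
  have hScompact : IsCompact S := hS ▸ isCompact_range (by fun_prop)
  have hxK : ∀ i, a i ≠ 0 → x i ∈ K := fun i hai =>
    mem_of_smul_dirac_le hai ((hμd ▸ Measure.le_sum _ i).trans hle) hconc
  refine ⟨fun y => ?_, ?_, hScompact, hS ▸ Continuous.metrizableSpace_range (by fun_prop),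
    fun r hr => ?_⟩
  · simp [Measure.sum_apply _ (measurableSet_singleton y), hdiscrete y,
      segmentMeasure_singleton (hx _)]
  · have hcont : (μ - μd) Sᶜ = 0 := Measure.absolutelyContinuous_of_le Measure.sub_le
      (measure_mono_null (compl_subset_compl.2 subset_union_right) hconc)
    rw [Measure.add_apply, hcont, zero_add]
    exact sum_smul_segmentMeasure_compl_eq_zero hScompact.isClosed.measurableSet
      fun i hai t ht => hS ▸ ⟨(⟨t, ht⟩, ⟨x i, hxK i hai⟩), rfl⟩
  · have hint : ∀ ℓ : E →L[ℝ] ℝ, Integrable (fun y => ℓ y) μ := fun ℓ =>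
      ℓ.continuous.integrable_of_measure_compl_eq_zero hK hconc
    rw [← Measure.sub_add_cancel_of_le hle] at hint ⊢
    subst hμd
    exact hr.of_segment_replacement hint
end
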